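/- arXiv:2512.06391 — 5 statements merged into one kernel-verified Lean document; each statement's English description precedes it below -/
import Mathlib

section
/- Let K₀ be a valued field of characteristic p > 0 with valuation v, and a ∈ K₀ with va < 0 and va not divisible by p in vK₀. Let ϑ be a root of X^p - X - a. Then [K₀(ϑ) : K₀] = p, v extends uniquely to K₀(ϑ), vϑ = va/p, (vK₀(ϑ) : vK₀) = p, and K₀(ϑ)v = K₀v. -/
/-!
From `v(ϑ^p - ϑ) = va > 1` we get `vϑ > 1` and hence `(vϑ)^p = va`. Since `va` is not a `p`-th
power in `vK₀` and `p` is prime, Bézout shows that no `(vϑ)^k` with `p ∤ k` lies in `vK₀`, so the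
nonzero values `v(c)·(vϑ)^i` (`c ∈ K₀`, `i < p`) are pairwise distinct and
`v(∑_{i<p} cᵢϑ^i) = maxᵢ v(cᵢϑ^i)`. This gives the linear independence of `1, ϑ, …, ϑ^(p-1)`,
the value group and the residue field. Uniqueness of the extension follows because
`v(cᵢϑ^i) ≤ 1 ↔ v(cᵢ^p a^i) ≤ 1`, a condition that only involves `v` on `K₀`.
-/

open Finset Polynomial

namespace Polynomial

theorem natDegree_X_pow_sub_X_sub_C {R : Type*} [CommRing R] [Nontrivial R] {n : ℕ} (hn : 1 < n)
    (a : R) : (X ^ n - X - C a).natDegree = n := by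
  rw [sub_sub, natDegree_sub_eq_left_of_natDegree_lt] <;> compute_degree!

theorem monic_X_pow_sub_X_sub_C {R : Type*} [CommRing R] {n : ℕ} (hn : 1 < n) (a : R) :
    (X ^ n - X - C a).Monic := by
  rw [sub_sub]
  exact monic_X_pow_sub (by compute_degree!)

end Polynomial

theorem exists_eq_sum_range_of_adjoin_eq_top {K L : Type*} [CommRing K] [Ring L] [Nontrivial L]
    [Algebra K L] {ϑ : L} (hgen : Algebra.adjoin K {ϑ} = ⊤) {q : K[X]} (hq : q.Monic)
    (hqϑ : aeval ϑ q = 0) (x : L) :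
    ∃ c : ℕ → K, x = ∑ i ∈ range q.natDegree, algebraMap K L (c i) * ϑ ^ i := by
  have hx : x ∈ (aeval (R := K) ϑ).range := by
    rw [← Algebra.adjoin_singleton_eq_range_aeval, hgen]
    exact Algebra.mem_top
  obtain ⟨g, rfl⟩ := (AlgHom.mem_range _).1 hx
  have hq1 : q ≠ 1 := by rintro rfl; simp at hqϑ
  refine ⟨(g %ₘ q).coeff, ?_⟩
  rw [← aeval_modByMonic_eq_self_of_root hqϑ, aeval_eq_sum_range' (natDegree_modByMonic_lt g hq hq1)]
  simp_rw [Algebra.smul_def]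

theorem finrank_eq_natDegree_of_adjoin_eq_top {K L : Type*} [Field K] [Field L] [Algebra K L]
    {ϑ : L} (hgen : Algebra.adjoin K {ϑ} = ⊤) {q : K[X]} (hq : q.Monic) (hqϑ : aeval ϑ q = 0)
    (hind : ∀ c : ℕ → K, ∑ i ∈ range q.natDegree, algebraMap K L (c i) * ϑ ^ i = 0 →
      ∀ i < q.natDegree, c i = 0) :
    Module.finrank K L = q.natDegree := by
  have hint : IsIntegral K ϑ := ⟨q, hq, by rwa [← aeval_def]⟩
  have hfr := IntermediateField.adjoin.finrank hint
  rw [IntermediateField.adjoin_eq_top_of_algebra K {ϑ} hgen, IntermediateField.finrank_top'] at hfr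
  rw [hfr]
  refine le_antisymm (natDegree_le_of_dvd (minpoly.dvd K ϑ hqϑ) hq.ne_zero)
    (not_lt.1 fun hlt => minpoly.ne_zero hint ?_)
  have hsum := minpoly.aeval K ϑ
  rw [aeval_eq_sum_range' hlt] at hsum
  simp_rw [Algebra.smul_def] at hsum
  ext i
  by_cases hi : i < q.natDegree
  · exact hind _ hsum i hi
  · exact coeff_eq_zero_of_natDegree_lt (by omega)

namespace Valuation

section Ring

variable {R Γ : Type*} [Ring R] [LinearOrderedCommGroupWithZero Γ] (v : Valuation R Γ)

theorem map_sum_eq_sup' {ι : Type*} {s : Finset ι} (hs : s.Nonempty) {f : ι → R}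
    (hf : ∀ i ∈ s, ∀ j ∈ s, v (f i) = v (f j) → v (f i) ≠ 0 → i = j) :
    v (∑ i ∈ s, f i) = s.sup' hs fun i => v (f i) := by
  classical
  obtain ⟨j, hj, hmax⟩ := s.exists_mem_eq_sup' hs fun i => v (f i)
  rw [hmax]
  rcases eq_or_ne (v (f j)) 0 with h0 | h0
  · refine le_antisymm (v.map_sum_le fun i hi => ?_) (h0 ▸ zero_le)
    exact hmax ▸ s.le_sup' (fun i => v (f i)) hi
  · refine v.map_sum_eq_of_lt hj fun i hi => ?_
    obtain ⟨his, hij⟩ := mem_sdiff.1 hi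
    refine lt_of_le_of_ne (hmax ▸ s.le_sup' (fun i => v (f i)) his) fun h => ?_
    exact hij (mem_singleton.2 (hf i his j hj h (h ▸ h0)))

theorem map_pow_sub_self_of_one_lt {x : R} {n : ℕ} (hn : 1 < n) (h : 1 < v (x ^ n - x)) :
    v (x ^ n - x) = v x ^ n := by
  have hx : 1 < v x := by
    by_contra! hx
    exact h.not_ge (v.map_sub_le (by rw [map_pow]; exact pow_le_one' hx n) hx)
  rw [v.map_sub_eq_of_lt_left (by rw [map_pow]; exact lt_self_pow₀ hx hn), map_pow]

end Ring

section Field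

variable {K Γ : Type*} [Field K] [LinearOrderedCommGroupWithZero Γ] (v : Valuation K Γ)
  {p : ℕ} {a : K} {γ : Γ}

theorem pow_notMem_range (hp : p.Prime) (hγ : γ ^ p = v a) (hnd : ∀ c, v c ^ p ≠ v a) {k : ℕ}
    (hk : ¬p ∣ k) : γ ^ k ∉ Set.range v := by
  rintro ⟨c, hc⟩
  have hγ0 : γ ≠ 0 := by
    rintro rfl
    exact hnd 0 (by rw [← hγ, map_zero])
  obtain ⟨m, n, hmn⟩ : IsCoprime (k : ℤ) p := by
    rw [Int.isCoprime_iff_gcd_eq_one, Int.gcd_natCast_natCast]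
    exact Nat.coprime_comm.1 ((hp.coprime_iff_not_dvd).2 hk)
  refine hnd (c ^ m * a ^ n) ?_
  have hγ' : v (c ^ m * a ^ n) = γ := by
    rw [map_mul, map_zpow₀, map_zpow₀, hc, ← hγ, ← zpow_natCast, ← zpow_natCast, ← zpow_mul,
      ← zpow_mul, ← zpow_add₀ hγ0, mul_comm (k : ℤ), mul_comm (p : ℤ), hmn, zpow_one]
  rw [hγ', hγ]

theorem eq_of_map_mul_pow_eq (hp : p.Prime) (hγ : γ ^ p = v a) (hnd : ∀ c, v c ^ p ≠ v a)
    {i j : ℕ} (hi : i < p) (hj : j < p) {c d : K} (h : v c * γ ^ i = v d * γ ^ j)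
    (h0 : v c * γ ^ i ≠ 0) : i = j := by
  wlog hij : i < j generalizing i j c d
  · rcases (not_lt.1 hij).eq_or_lt with hji | hji
    · exact hji.symm
    · exact (this hj hi h.symm (h ▸ h0) hji).symm
  have hd : v d ≠ 0 := left_ne_zero_of_mul (h ▸ h0)
  have hγi : γ ^ i ≠ 0 := right_ne_zero_of_mul h0
  refine absurd ⟨c / d, ?_⟩ (v.pow_notMem_range hp hγ hnd
    (Nat.not_dvd_of_pos_of_lt (Nat.sub_pos_of_lt hij) (by omega)))
  rw [map_div₀, div_eq_iff hd]
  refine mul_right_cancel₀ hγi ?_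
  rw [h, mul_right_comm, pow_sub_mul_pow γ hij.le, mul_comm]

end Field

section AlgebraMap

variable {K L Γ : Type*} [Field K] [Field L] [Algebra K L] [LinearOrderedCommGroupWithZero Γ]
  (u : Valuation L Γ) {p : ℕ} {a : K} {ϑ : L}

theorem map_sum_algebraMap_mul_pow (hp : p.Prime) (hvϑ : u ϑ ^ p = u (algebraMap K L a))
    (hnd : ∀ c, u (algebraMap K L c) ^ p ≠ u (algebraMap K L a)) (c : ℕ → K) :
    u (∑ i ∈ range p, algebraMap K L (c i) * ϑ ^ i) =
      (range p).sup' (nonempty_range_iff.2 hp.ne_zero)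
        fun i => u (algebraMap K L (c i) * ϑ ^ i) := by
  refine u.map_sum_eq_sup' _ fun i hi j hj h h0 => ?_
  simp only [map_mul, map_pow] at h h0
  exact (u.comap (algebraMap K L)).eq_of_map_mul_pow_eq hp hvϑ hnd (mem_range.1 hi)
    (mem_range.1 hj) h h0

theorem eq_zero_of_sum_algebraMap_mul_pow_eq_zero (hp : p.Prime)
    (hvϑ : u ϑ ^ p = u (algebraMap K L a))
    (hnd : ∀ c, u (algebraMap K L c) ^ p ≠ u (algebraMap K L a)) {c : ℕ → K}
    (h : ∑ i ∈ range p, algebraMap K L (c i) * ϑ ^ i = 0) : ∀ i < p, c i = 0 := by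
  have hϑ0 : ϑ ≠ 0 := by
    rintro rfl
    exact hnd 0 (by rw [← hvϑ, map_zero, map_zero])
  intro i hi
  have hle := le_sup' (fun i => u (algebraMap K L (c i) * ϑ ^ i)) (mem_range.2 hi)
  rw [← u.map_sum_algebraMap_mul_pow hp hvϑ hnd, h, map_zero, le_zero_iff, u.zero_iff] at hle
  simpa [hϑ0] using hle

theorem exists_map_sum_algebraMap_mul_pow_eq (hp : p.Prime)
    (hvϑ : u ϑ ^ p = u (algebraMap K L a))
    (hnd : ∀ c, u (algebraMap K L c) ^ p ≠ u (algebraMap K L a)) (c : ℕ → K) :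
    ∃ i < p, u (∑ i ∈ range p, algebraMap K L (c i) * ϑ ^ i) =
      u (algebraMap K L (c i)) * u ϑ ^ i := by
  obtain ⟨i, hi, h⟩ := exists_mem_eq_sup' (nonempty_range_iff.2 hp.ne_zero)
    fun i => u (algebraMap K L (c i) * ϑ ^ i)
  refine ⟨i, mem_range.1 hi, ?_⟩
  rw [u.map_sum_algebraMap_mul_pow hp hvϑ hnd, h, map_mul, map_pow]

theorem map_sum_algebraMap_mul_pow_sub_lt_one (hp : p.Prime)
    (hvϑ : u ϑ ^ p = u (algebraMap K L a))
    (hnd : ∀ c, u (algebraMap K L c) ^ p ≠ u (algebraMap K L a)) {c : ℕ → K}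
    (h : u (∑ i ∈ range p, algebraMap K L (c i) * ϑ ^ i) ≤ 1) :
    u (∑ i ∈ range p, algebraMap K L (c i) * ϑ ^ i - algebraMap K L (c 0)) < 1 := by
  rw [← add_sum_erase _ _ (mem_range.2 hp.pos), pow_zero, mul_one, add_sub_cancel_left]
  refine u.map_sum_lt one_ne_zero fun i hi => ?_
  obtain ⟨hi0, hi⟩ := mem_erase.1 hi
  have hle : u (algebraMap K L (c i) * ϑ ^ i) ≤ 1 := by
    rw [u.map_sum_algebraMap_mul_pow hp hvϑ hnd] at h
    exact (le_sup' _ hi).trans h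
  refine hle.lt_of_ne fun h1 => hi0 ?_
  rw [map_mul, map_pow] at h1
  exact (u.comap (algebraMap K L)).eq_of_map_mul_pow_eq hp hvϑ hnd (mem_range.1 hi) hp.pos
    (d := 1) (by simpa using h1) (by simp [h1])

theorem map_sum_algebraMap_mul_pow_le_one_iff (hp : p.Prime)
    (hvϑ : u ϑ ^ p = u (algebraMap K L a))
    (hnd : ∀ c, u (algebraMap K L c) ^ p ≠ u (algebraMap K L a)) (c : ℕ → K) :
    u (∑ i ∈ range p, algebraMap K L (c i) * ϑ ^ i) ≤ 1 ↔
      ∀ i ∈ range p, u (algebraMap K L (c i ^ p * a ^ i)) ≤ 1 := by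
  rw [u.map_sum_algebraMap_mul_pow hp hvϑ hnd, sup'_le_iff]
  refine forall₂_congr fun i _ => ?_
  rw [← pow_le_one_iff hp.ne_zero]
  simp only [map_mul, map_pow]
  rw [mul_pow, ← pow_mul, mul_comm i, pow_mul, hvϑ]

theorem isEquiv_of_comap_isEquiv (hp : p.Prime) (hϑ : ϑ ^ p - ϑ = algebraMap K L a)
    (hua : 1 < u (algebraMap K L a))
    (hnd : ∀ c, u (algebraMap K L c) ^ p ≠ u (algebraMap K L a))
    (hrep : ∀ x, ∃ c : ℕ → K, x = ∑ i ∈ range p, algebraMap K L (c i) * ϑ ^ i)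
    {Γ' : Type*} [LinearOrderedCommGroupWithZero Γ'] {w : Valuation L Γ'}
    (hw : (w.comap (algebraMap K L)).IsEquiv (u.comap (algebraMap K L))) : w.IsEquiv u := by
  have hwa : 1 < w (algebraMap K L a) := hw.one_lt_iff_one_lt.2 hua
  have hwnd : ∀ c, w (algebraMap K L c) ^ p ≠ w (algebraMap K L a) := fun c h =>
    hnd c (by simpa using (hw.eq_iff (r := c ^ p) (s := a)).1 (by simpa using h))
  have huϑ : u ϑ ^ p = u (algebraMap K L a) := by
    rw [← u.map_pow_sub_self_of_one_lt hp.one_lt (hϑ ▸ hua), hϑ]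
  have hwϑ : w ϑ ^ p = w (algebraMap K L a) := by
    rw [← w.map_pow_sub_self_of_one_lt hp.one_lt (hϑ ▸ hwa), hϑ]
  refine isEquiv_of_val_le_one fun x => ?_
  obtain ⟨c, rfl⟩ := hrep x
  rw [w.map_sum_algebraMap_mul_pow_le_one_iff hp hwϑ hwnd,
    u.map_sum_algebraMap_mul_pow_le_one_iff hp huϑ hnd]
  exact forall₂_congr fun i _ => hw.le_one_iff_le_one

end AlgebraMap

end Valuation

theorem artin_schreier_root_negative_value_general
    {K₀ L : Type*} [Field K₀] [Field L] [Algebra K₀ L]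
    {p : ℕ} (hp : p.Prime)
    {Γ : Type*} [LinearOrderedCommGroupWithZero Γ] (v : Valuation L Γ)
    (a : K₀)
    -- additive `va < 0`
    (hva : 1 < v (algebraMap K₀ L a))
    -- `va` is not divisible by `p` in `vK₀`
    (hnd : ¬ ∃ c : K₀, c ≠ 0 ∧ (v (algebraMap K₀ L c)) ^ p = v (algebraMap K₀ L a))
    (ϑ : L) (hϑ : ϑ ^ p - ϑ = algebraMap K₀ L a)
    (hgen : Algebra.adjoin K₀ {ϑ} = ⊤) :
    -- `[K₀(ϑ) : K₀] = p`
    Module.finrank K₀ L = p ∧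
    -- the valuation extends uniquely from `K₀` to `K₀(ϑ)`
    (∀ (Γ' : Type) [LinearOrderedCommGroupWithZero Γ'] (w : Valuation L Γ'),
        (w.comap (algebraMap K₀ L)).IsEquiv (v.comap (algebraMap K₀ L)) → w.IsEquiv v) ∧
    -- `vϑ = va/p`
    (v ϑ) ^ p = v (algebraMap K₀ L a) ∧
    -- `(vK₀(ϑ) : vK₀) = p`: `vϑ ∉ vK₀` and `vL = vK₀ + {0,…,p-1}·vϑ`
    (¬ ∃ c : K₀, c ≠ 0 ∧ v (algebraMap K₀ L c) = v ϑ) ∧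
    (∀ x : L, x ≠ 0 → ∃ c : K₀, ∃ i : ℕ, i < p ∧
        v x = v (algebraMap K₀ L c) * (v ϑ) ^ i) ∧
    -- `K₀(ϑ)v = K₀v`
    (∀ x : L, v x ≤ 1 → ∃ c : K₀, v (x - algebraMap K₀ L c) < 1) := by
  have hnd' : ∀ c, v (algebraMap K₀ L c) ^ p ≠ v (algebraMap K₀ L a) := by
    intro c hc
    rcases eq_or_ne c 0 with rfl | hc0
    · rw [map_zero, map_zero, zero_pow hp.ne_zero] at hc
      exact (zero_lt_one.trans hva).ne hc
    · exact hnd ⟨c, hc0, hc⟩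
  have hvϑ : v ϑ ^ p = v (algebraMap K₀ L a) := by
    rw [← v.map_pow_sub_self_of_one_lt hp.one_lt (hϑ ▸ hva), hϑ]
  have hq := monic_X_pow_sub_X_sub_C hp.one_lt a
  have hqdeg := natDegree_X_pow_sub_X_sub_C hp.one_lt a
  have hqϑ : aeval ϑ (X ^ p - X - C a) = 0 := by simp [hϑ]
  have hrep := hqdeg ▸ exists_eq_sum_range_of_adjoin_eq_top hgen hq hqϑ
  refine ⟨hqdeg ▸ finrank_eq_natDegree_of_adjoin_eq_top hgen hq hqϑ ?_,
    fun _ _ w hw => v.isEquiv_of_comap_isEquiv hp hϑ hva hnd' hrep hw, hvϑ, ?_, ?_, ?_⟩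
  · rw [hqdeg]
    exact fun c => v.eq_zero_of_sum_algebraMap_mul_pow_eq_zero hp hvϑ hnd'
  · rintro ⟨c, -, hc⟩
    exact hnd' c (by rw [hc, hvϑ])
  · intro x _
    obtain ⟨c, rfl⟩ := hrep x
    obtain ⟨i, hi, h⟩ := v.exists_map_sum_algebraMap_mul_pow_eq hp hvϑ hnd' c
    exact ⟨c i, i, hi, h⟩
  · intro x hx
    obtain ⟨c, rfl⟩ := hrep x
    exact ⟨c 0, v.map_sum_algebraMap_mul_pow_sub_lt_one hp hvϑ hnd' hx⟩

/-- Let `(K₀,v)` be a valued field of characteristic `p > 0` and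
`a ∈ K₀` with `va < 0` not divisible by `p` in `vK₀`.  Let `ϑ` be a root of
`X^p - X - a` (in a field `L = K₀(ϑ)`).  Then `[K₀(ϑ) : K₀] = p`, `v` extends
uniquely to `K₀(ϑ)`, `vϑ = va/p`, `(vK₀(ϑ) : vK₀) = p`, and `K₀(ϑ)v = K₀v`.

Multiplicative convention: additive `va < 0` reads `1 < v a`; additive
`vϑ = va/p` reads `(v ϑ)^p = v a`. -/
theorem artin_schreier_root_negative_value
    {K₀ L : Type*} [Field K₀] [Field L] [Algebra K₀ L]
    {p : ℕ} (hp : p.Prime) [CharP K₀ p]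
    {Γ : Type*} [LinearOrderedCommGroupWithZero Γ] (v : Valuation L Γ)
    (a : K₀)
    -- additive `va < 0`
    (hva : 1 < v (algebraMap K₀ L a))
    -- `va` is not divisible by `p` in `vK₀`
    (hnd : ¬ ∃ c : K₀, c ≠ 0 ∧ (v (algebraMap K₀ L c)) ^ p = v (algebraMap K₀ L a))
    (ϑ : L) (hϑ : ϑ ^ p - ϑ = algebraMap K₀ L a)
    (hgen : Algebra.adjoin K₀ {ϑ} = ⊤) :
    -- `[K₀(ϑ) : K₀] = p`
    Module.finrank K₀ L = p ∧
    -- the valuation extends uniquely from `K₀` to `K₀(ϑ)`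
    (∀ (Γ' : Type) [LinearOrderedCommGroupWithZero Γ'] (w : Valuation L Γ'),
        (w.comap (algebraMap K₀ L)).IsEquiv (v.comap (algebraMap K₀ L)) → w.IsEquiv v) ∧
    -- `vϑ = va/p`
    (v ϑ) ^ p = v (algebraMap K₀ L a) ∧
    -- `(vK₀(ϑ) : vK₀) = p`: `vϑ ∉ vK₀` and `vL = vK₀ + {0,…,p-1}·vϑ`
    (¬ ∃ c : K₀, c ≠ 0 ∧ v (algebraMap K₀ L c) = v ϑ) ∧
    (∀ x : L, x ≠ 0 → ∃ c : K₀, ∃ i : ℕ, i < p ∧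
        v x = v (algebraMap K₀ L c) * (v ϑ) ^ i) ∧
    -- `K₀(ϑ)v = K₀v`
    (∀ x : L, v x ≤ 1 → ∃ c : K₀, v (x - algebraMap K₀ L c) < 1) :=
  artin_schreier_root_negative_value_general hp v a hva hnd ϑ hϑ hgen
end

section
/- With K = k((t))^{1/p^∞} as above and ϑ a root of X^p - X - 1/t, for the partial sums b_k := t^{-1/p} + t^{-1/p²} + ... + t^{-1/p^k} ∈ K one has v(ϑ - b_k) = -1/p^{k+1}, and there is no c ∈ K with v(ϑ - c) > -1/p^k for all k. -/
/-!
Frobenius turns the partial sums into a recursion: `b_{i+1}^p = b_i + t⁻¹`, so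
`(ϑ - b_{i+1})^p = ϑ - b_i` and hence `(ϑ - b_i)^{p^i} = ϑ`. Since `v(ϑ^p - ϑ) = v(t)⁻¹ > 1`,
the ultrametric inequality forces `v(ϑ)^p = v(t)⁻¹`, which gives the values `v(ϑ - b_i)`.

If `c` were closer to `ϑ` than every `b_i`, then `v(b_n - c) = v(ϑ - b_n)` for all `n`.
By pure inseparability `c^{p^n} ∈ k((t))` for some `n`, and also `b_n^{p^n} ∈ k((t))`, so
`(b_n - c)^{p^n}` would be an element of `k((t))` whose valuation is a `p`-th root of `v(t)⁻¹`;
but the value group of `k((t))` is `v(t)^ℤ`.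
-/
theorem Valuation.map_pow_sub_self_eq {R Γ : Type*} [Ring R] [LinearOrderedCommGroupWithZero Γ]
    (v : Valuation R Γ) {p : ℕ} (hp : 1 < p) {x : R} (h : 1 < v (x ^ p - x)) :
    v (x ^ p - x) = v x ^ p := by
  have hx : 1 < v x := by
    by_contra! hx
    refine (h.trans_le (v.map_sub _ _)).not_ge (max_le ?_ hx)
    simpa only [map_pow] using pow_le_one₀ zero_le hx
  have hlt : v x < v (x ^ p) := by
    simpa only [map_pow, pow_one] using pow_lt_pow_right₀ hx hp
  rw [v.map_sub_eq_of_lt_left hlt, map_pow]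

theorem sub_pow_expChar_pow_eq_self {R : Type*} [CommRing R] {p : ℕ} [ExpChar R p]
    {x y : R} {b : ℕ → R} (hx : x ^ p = x + y) (hb₀ : b 0 = 0)
    (hb : ∀ i, b (i + 1) ^ p = b i + y) (i : ℕ) : (x - b i) ^ p ^ i = x := by
  induction i with
  | zero => simp [hb₀]
  | succ i ih => rw [pow_succ', pow_mul, sub_pow_expChar, hx, hb, add_sub_add_right_eq_sub, ih]

namespace LaurentSeries

variable {k Γ : Type*} [Field k] [LinearOrderedCommGroupWithZero Γ]
  {w : Valuation (LaurentSeries k) Γ}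

theorem one_lt_inv_single_one_of_isEquiv (hw : w.IsEquiv Valued.v) :
    1 < (w (HahnSeries.single 1 1))⁻¹ := by
  have ht : w (HahnSeries.single 1 1) ≠ 0 :=
    w.ne_zero_iff.mpr (HahnSeries.single_ne_zero one_ne_zero)
  rw [one_lt_inv₀ (zero_lt_iff.mpr ht), hw.lt_one_iff_lt_one, valuation_single_zpow]
  exact WithZero.exp_lt_exp.mpr (by norm_num)

theorem pow_ne_inv_single_one_of_isEquiv (hw : w.IsEquiv Valued.v) {p : ℕ} (hp : 1 < p)
    (y : LaurentSeries k) :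
    w y ^ p ≠ (w (HahnSeries.single 1 1))⁻¹ := by
  intro h
  have ht : w (HahnSeries.single 1 1) ≠ 0 :=
    w.ne_zero_iff.mpr (HahnSeries.single_ne_zero one_ne_zero)
  have h1 : Valued.v (y ^ p * HahnSeries.single 1 1) = 1 := by
    rw [← hw.eq_one_iff_eq_one, map_mul, map_pow, h, inv_mul_cancel₀ ht]
  rw [map_mul, map_pow, valuation_single_zpow] at h1
  have hy : Valued.v y ≠ 0 := by rintro hy; simp [hy, zero_pow (by omega : p ≠ 0)] at h1
  rw [← WithZero.exp_log hy, ← WithZero.exp_nsmul, ← WithZero.exp_add, ← WithZero.exp_zero,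
    WithZero.exp_inj] at h1
  have hlog : (p : ℤ) * WithZero.log (Valued.v y) = 1 := by
    rw [Int.nsmul_eq_mul] at h1
    linarith
  have : (p : ℤ) = 1 := Int.eq_one_of_mul_eq_one_right (by positivity) hlog
  omega

end LaurentSeries

section ArtinSchreierApprox

variable {K : Type*} [Field K] (p : ℕ) [ExpChar K p] [PerfectRing K p]

/-- `artinSchreierApprox p a i = a^(-1/p) + a^(-1/p²) + ⋯ + a^(-1/pⁱ)`. -/
noncomputable def artinSchreierApprox (a : K) (i : ℕ) : K :=
  ∑ j ∈ Finset.range i, ((frobeniusEquiv K p).symm^[j + 1] a)⁻¹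

variable {p}

@[simp]
theorem artinSchreierApprox_zero (a : K) : artinSchreierApprox p a 0 = 0 :=
  Finset.sum_range_zero _

theorem artinSchreierApprox_succ_pow (a : K) (i : ℕ) :
    artinSchreierApprox p a (i + 1) ^ p = artinSchreierApprox p a i + a⁻¹ := by
  rw [artinSchreierApprox, ← frobenius_def, map_sum, Finset.sum_range_succ', artinSchreierApprox]
  simp only [map_inv₀, frobenius_def, Function.iterate_succ_apply', frobeniusEquiv_symm_pow_p,
    Function.iterate_zero_apply]

theorem artinSchreierApprox_pow_pow_mem {S : Subfield K} {a : K} (ha : a ∈ S) (n : ℕ) :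
    artinSchreierApprox p a n ^ p ^ n ∈ S := by
  rw [artinSchreierApprox, ← iterateFrobenius_def, map_sum]
  refine S.sum_mem fun j hj => ?_
  have hjn : n = (j + 1) + (n - (j + 1)) := by have := Finset.mem_range.mp hj; omega
  rw [map_inv₀, iterateFrobenius_def, hjn, pow_add, pow_mul,
    iterate_frobeniusEquiv_symm_pow_p_pow]
  exact S.inv_mem (S.pow_mem ha _)

end ArtinSchreierApprox

theorem partial_sums_approximate_artin_schreier_root_general
    {k : Type*} [Field k] {p : ℕ} (hp : p.Prime)
    {K L : Type*} [Field K] [Field L]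
    [Algebra (LaurentSeries k) K] [Algebra K L] [Algebra (LaurentSeries k) L]
    [IsScalarTower (LaurentSeries k) K L]
    [ExpChar K p] [PerfectRing K p] [IsPurelyInseparable (LaurentSeries k) K]
    {Γ : Type*} [LinearOrderedCommGroupWithZero Γ] (v : Valuation L Γ)
    (hres : (v.comap (algebraMap (LaurentSeries k) L)).IsEquiv
        (Valued.v : Valuation (LaurentSeries k) (WithZero (Multiplicative ℤ))))
    (ϑ : L)
    (hϑ : ϑ ^ p - ϑ = (algebraMap (LaurentSeries k) L (HahnSeries.single (1 : ℤ) (1 : k)))⁻¹) :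
    -- `troot j = t^{1/p^j}`, `b i = Σ_{j=1}^i t^{-1/p^j}`
    let troot : ℕ → K := fun j =>
      (fun x => (frobeniusEquiv K p).symm x)^[j]
        (algebraMap (LaurentSeries k) K (HahnSeries.single (1 : ℤ) (1 : k)))
    let b : ℕ → K := fun i => ∑ j ∈ Finset.range i, (troot (j + 1))⁻¹
    -- `v(ϑ - b_k) = -1/p^{k+1}`:
    (∀ i : ℕ, (v (ϑ - algebraMap K L (b i))) ^ (p ^ (i + 1)) =
        (v (algebraMap (LaurentSeries k) L (HahnSeries.single (1 : ℤ) (1 : k))))⁻¹) ∧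
    -- no `c ∈ K` satisfies `v(ϑ - c) > -1/p^k` for all `k`:
    ¬ ∃ c : K, ∀ i : ℕ, v (ϑ - algebraMap K L c) < v (ϑ - algebraMap K L (b i)) := by
  intro troot b
  set t : LaurentSeries k := HahnSeries.single 1 1
  have : ExpChar (LaurentSeries k) p :=
    (algebraMap (LaurentSeries k) K).expChar (FaithfulSMul.algebraMap_injective _ _) p
  have : ExpChar L p := expChar_of_injective_algebraMap (algebraMap K L).injective p
  have hb (i : ℕ) : b i = artinSchreierApprox p (algebraMap (LaurentSeries k) K t) i := rfl
  have hvϑ : v ϑ ^ p = (v (algebraMap (LaurentSeries k) L t))⁻¹ := by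
    have h1 : 1 < v (ϑ ^ p - ϑ) := by
      simpa only [hϑ, map_inv₀, Valuation.comap_apply] using
        LaurentSeries.one_lt_inv_single_one_of_isEquiv hres
    rw [← v.map_pow_sub_self_eq hp.one_lt h1, hϑ, map_inv₀]
  have hpow (i : ℕ) : (ϑ - algebraMap K L (b i)) ^ p ^ i = ϑ := by
    refine sub_pow_expChar_pow_eq_self (b := fun i => algebraMap K L (b i))
      (eq_add_of_sub_eq' hϑ) (by simp [hb]) (fun i => ?_) i
    rw [← map_pow, hb, hb, artinSchreierApprox_succ_pow, map_add, map_inv₀,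
      ← IsScalarTower.algebraMap_apply]
  have hvapprox (i : ℕ) :
      v (ϑ - algebraMap K L (b i)) ^ p ^ (i + 1) = (v (algebraMap (LaurentSeries k) L t))⁻¹ := by
    rw [pow_succ, pow_mul, ← map_pow, hpow, hvϑ]
  refine ⟨hvapprox, fun ⟨c, hc⟩ => ?_⟩
  obtain ⟨n, y, hy⟩ := IsPurelyInseparable.pow_mem (LaurentSeries k) p c
  obtain ⟨z, hz⟩ := artinSchreierApprox_pow_pow_mem (p := p)
    (S := (algebraMap (LaurentSeries k) K).fieldRange) ⟨t, rfl⟩ n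
  have hvbc : v (algebraMap K L (b n - c)) = v (ϑ - algebraMap K L (b n)) := by
    rw [map_sub, ← sub_sub_sub_cancel_left _ _ ϑ, v.map_sub_eq_of_lt_right (hc n)]
  have hd : algebraMap (LaurentSeries k) L (z - y) = algebraMap K L ((b n - c) ^ p ^ n) := by
    rw [IsScalarTower.algebraMap_apply (LaurentSeries k) K L, map_sub, hz, hy, hb,
      sub_pow_expChar_pow]
  refine LaurentSeries.pow_ne_inv_single_one_of_isEquiv hres hp.one_lt (z - y) ?_
  rw [Valuation.comap_apply, Valuation.comap_apply, hd, map_pow, map_pow, hvbc, ← pow_mul,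
    ← pow_succ, hvapprox]

/-- With `K = k((t))^{1/p^∞}` (a perfect purely inseparable extension of
`k((t))` with the unique extension of the `t`-adic valuation) and `ϑ` a root of
`X^p - X - 1/t`, for the partial sums `b_k = t^{-1/p} + ⋯ + t^{-1/p^k} ∈ K` one has
`v(ϑ - b_k) = -1/p^{k+1}` (multiplicatively: `v(ϑ - b_k)^{p^{k+1}} = v(t)⁻¹`), and
there is no `c ∈ K` with `v(ϑ - c) > -1/p^k` for all `k` (multiplicatively: with
`v(ϑ - c) < v(ϑ - b_k)` for all `k`, since `-1/p^{k+1} = v(ϑ - b_k)`).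
The root `t^{1/p^j} ∈ K` is obtained via the inverse of the Frobenius equivalence of
the perfect field `K`. -/
theorem partial_sums_approximate_artin_schreier_root
    {k : Type*} [Field k] {p : ℕ} (hp : p.Prime) [CharP k p] [ExpChar k p] [PerfectRing k p]
    {K L : Type*} [Field K] [Field L]
    [Algebra (LaurentSeries k) K] [Algebra K L] [Algebra (LaurentSeries k) L]
    [IsScalarTower (LaurentSeries k) K L]
    [CharP K p] [ExpChar K p] [PerfectRing K p] [IsPurelyInseparable (LaurentSeries k) K]
    {Γ : Type*} [LinearOrderedCommGroupWithZero Γ] (v : Valuation L Γ)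
    (hres : (v.comap (algebraMap (LaurentSeries k) L)).IsEquiv
        (Valued.v : Valuation (LaurentSeries k) (WithZero (Multiplicative ℤ))))
    (ϑ : L)
    (hϑ : ϑ ^ p - ϑ = (algebraMap (LaurentSeries k) L (HahnSeries.single (1 : ℤ) (1 : k)))⁻¹)
    (hgen : Algebra.adjoin K {ϑ} = ⊤) :
    -- `troot j = t^{1/p^j}`, `b i = Σ_{j=1}^i t^{-1/p^j}`
    let troot : ℕ → K := fun j =>
      (fun x => (frobeniusEquiv K p).symm x)^[j]
        (algebraMap (LaurentSeries k) K (HahnSeries.single (1 : ℤ) (1 : k)))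
    let b : ℕ → K := fun i => ∑ j ∈ Finset.range i, (troot (j + 1))⁻¹
    -- `v(ϑ - b_k) = -1/p^{k+1}`:
    (∀ i : ℕ, (v (ϑ - algebraMap K L (b i))) ^ (p ^ (i + 1)) =
        (v (algebraMap (LaurentSeries k) L (HahnSeries.single (1 : ℤ) (1 : k))))⁻¹) ∧
    -- no `c ∈ K` satisfies `v(ϑ - c) > -1/p^k` for all `k`:
    ¬ ∃ c : K, ∀ i : ℕ, v (ϑ - algebraMap K L c) < v (ϑ - algebraMap K L (b i)) :=
  partial_sums_approximate_artin_schreier_root_general hp v hres ϑ hϑ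
end

section
/- Let (L₁, v_p) be a valued field of characteristic 0 with v_p L₁ = ℤ·v_p(p) and perfect residue field K of characteristic p. Choose a_0 = p and a_i with a_i^p = a_{i-1}, and set L₂ = L₁(a_i | i ∈ ℕ). Then v_p extends uniquely to L₂, v_p L₂ = (1/p^∞)ℤ·v_p(p), and L₂v_p = K. -/
/-!
Every `x ∈ L₂` lies in some `L₁(a_n)`, hence is a sum `∑_{r < p^n} d_r a_n^r` with `d_r ∈ L₁`.
Since `(d_r a_n^r)^{p^n} = d_r^{p^n} p^r ∈ L₁`, a nonzero monomial has value `v(p)^{m + r/p^n}`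
with `m ∈ ℤ`; the exponents are distinct modulo `ℤ`, so the nonzero monomials have distinct
values and `v x` is the largest of them. This gives the value group. A valuation `w` equivalent
to `v` on `L₁` compares `p^n`-th powers, hence monomials, exactly as `v` does, so `w x ≤ 1` iff
every monomial has `v`-value `≤ 1` iff `v x ≤ 1`. Finally, if `v x ≤ 1` then each monomial with
`r ≠ 0` has value `≠ 1`, hence `< 1`, so `x` has the same residue as `d_0`.
-/

open Polynomial

theorem eq_of_zpow_mul_add_eq_zpow_mul_add {Γ : Type*} [LinearOrderedCommGroupWithZero Γ]
    {π : Γ} (hπ0 : π ≠ 0) (hπ1 : π ≠ 1) {N r s : ℕ} (hr : r < N) (hs : s < N) {m m' : ℤ}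
    (h : π ^ (m * N + r) = π ^ (m' * N + s)) : r = s := by
  have h := congrArg (· % (N : ℤ)) (zpow_right_injective₀ (zero_lt_iff.2 hπ0) hπ1 h)
  simp only [add_comm _ (r : ℤ), add_comm _ (s : ℤ), Int.add_mul_emod_self_right] at h
  rwa [Int.emod_eq_of_lt (by positivity) (by omega), Int.emod_eq_of_lt (by positivity) (by omega),
    Nat.cast_inj] at h

namespace Valuation

variable {R Γ₀ ι : Type*} [Ring R] [LinearOrderedCommMonoidWithZero Γ₀] (u : Valuation R Γ₀)

theorem exists_map_sum_eq_of_ne {s : Finset ι} (hs : s.Nonempty) {f : ι → R}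
    (hf : ∀ i ∈ s, ∀ j ∈ s, i ≠ j → f i ≠ 0 → u (f i) ≠ u (f j)) :
    ∃ j ∈ s, u (∑ i ∈ s, f i) = u (f j) ∧ ∀ i ∈ s, u (f i) ≤ u (f j) := by
  classical
  obtain ⟨j, hj, hmax⟩ := s.exists_max_image (fun i => u (f i)) hs
  refine ⟨j, hj, ?_, hmax⟩
  rcases eq_or_ne (u (f j)) 0 with h0 | h0
  · exact le_antisymm (u.map_sum_le fun i hi => h0 ▸ hmax i hi) (h0 ▸ zero_le)
  refine u.map_sum_eq_of_lt hj fun i hi => (hmax i (Finset.mem_sdiff.1 hi).1).lt_of_ne ?_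
  obtain ⟨his, hij⟩ := Finset.mem_sdiff.1 hi
  by_cases hfi : f i = 0
  · simpa [hfi] using h0.symm
  · exact hf i his j hj (by simpa using hij) hfi

theorem map_sum_le_iff_of_ne {s : Finset ι} {f : ι → R}
    (hf : ∀ i ∈ s, ∀ j ∈ s, i ≠ j → f i ≠ 0 → u (f i) ≠ u (f j)) {g : Γ₀} :
    u (∑ i ∈ s, f i) ≤ g ↔ ∀ i ∈ s, u (f i) ≤ g := by
  rcases s.eq_empty_or_nonempty with rfl | hs
  · simp
  obtain ⟨j, hj, hsum, hmax⟩ := u.exists_map_sum_eq_of_ne hs hf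
  rw [hsum]
  exact ⟨fun h i hi => (hmax i hi).trans h, fun h => h j hj⟩

theorem le_iff_le_of_pow_eq_algebraMap {K L Γ Γ' : Type*} [CommRing K] [Ring L]
    [Algebra K L] [LinearOrderedCommGroupWithZero Γ] [LinearOrderedCommGroupWithZero Γ']
    {v : Valuation L Γ} {w : Valuation L Γ'}
    (h : (w.comap (algebraMap K L)).IsEquiv (v.comap (algebraMap K L)))
    {N : ℕ} (hN : N ≠ 0) {x y : L} {c d : K}
    (hx : x ^ N = algebraMap K L c) (hy : y ^ N = algebraMap K L d) :
    w x ≤ w y ↔ v x ≤ v y := by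
  calc w x ≤ w y ↔ w (x ^ N) ≤ w (y ^ N) := by
        rw [map_pow, map_pow, pow_le_pow_iff_left₀ zero_le zero_le hN]
    _ ↔ v (x ^ N) ≤ v (y ^ N) := by rw [hx, hy]; exact h c d
    _ ↔ v x ≤ v y := by rw [map_pow, map_pow, pow_le_pow_iff_left₀ zero_le zero_le hN]

end Valuation

theorem exists_mem_adjoin_singleton_of_adjoin_range_eq_top {R A : Type*} [CommSemiring R]
    [Semiring A] [Algebra R A] {a : ℕ → A} (ha : ∀ n, a n ∈ Algebra.adjoin R {a (n + 1)})
    (hgen : Algebra.adjoin R (Set.range a) = ⊤) (x : A) :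
    ∃ n, x ∈ Algebra.adjoin R {a n} := by
  have hmono : Monotone fun n => Algebra.adjoin R {a n} :=
    monotone_nat_of_le_succ fun n => Algebra.adjoin_le (Set.singleton_subset_iff.2 (ha n))
  have hx : x ∈ (⨆ n, Algebra.adjoin R {a n} : Subalgebra R A) := by
    rw [← Algebra.adjoin_iUnion, Set.iUnion_singleton_eq_range, hgen]
    trivial
  rw [← SetLike.mem_coe, Subalgebra.coe_iSup_of_directed hmono.directed_le] at hx
  simpa using hx

theorem exists_eq_sum_pow_of_mem_adjoin_singleton {R A : Type*} [CommRing R] [CommRing A]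
    [Algebra R A] {α : A} {g : R[X]} (hg : g.Monic) (hα : aeval α g = 0) {x : A}
    (hx : x ∈ Algebra.adjoin R {α}) :
    ∃ d : ℕ → R, x = ∑ r ∈ Finset.range g.natDegree, algebraMap R A (d r) * α ^ r := by
  by_cases hg1 : g = 1
  · have : Subsingleton A := subsingleton_of_zero_eq_one (by simpa [hg1] using hα.symm)
    exact ⟨0, Subsingleton.elim _ _⟩
  rw [Algebra.adjoin_singleton_eq_range_aeval, AlgHom.mem_range] at hx
  obtain ⟨f, rfl⟩ := hx
  refine ⟨(f %ₘ g).coeff, ?_⟩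
  rw [← aeval_modByMonic_eq_self_of_root hα, aeval_eq_sum_range' (natDegree_modByMonic_lt f hg hg1)]
  simp only [Algebra.smul_def]

section PowerRootsOfP

variable {L₁ L₂ : Type*} [Field L₁] [Field L₂] [Algebra L₁ L₂] {p : ℕ} {a : ℕ → L₂}

theorem pow_pow_eq_of_pow_succ (haS : ∀ i, a (i + 1) ^ p = a i) (m k : ℕ) :
    a (m + k) ^ p ^ k = a m := by
  induction k with
  | zero => simp
  | succ k ih => rw [pow_succ', pow_mul, ← add_assoc, haS, ih]

theorem pow_pow_eq_algebraMap (ha0 : a 0 = algebraMap L₁ L₂ p) (haS : ∀ i, a (i + 1) ^ p = a i)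
    (n : ℕ) : a n ^ p ^ n = algebraMap L₁ L₂ p := by
  rw [← ha0, ← pow_pow_eq_of_pow_succ haS 0 n, zero_add]

theorem exists_eq_sum_monomials (hp : p ≠ 0) (ha0 : a 0 = algebraMap L₁ L₂ p)
    (haS : ∀ i, a (i + 1) ^ p = a i) (hgen : Algebra.adjoin L₁ (Set.range a) = ⊤) (x : L₂) :
    ∃ n, ∃ d : ℕ → L₁, x = ∑ r ∈ Finset.range (p ^ n), algebraMap L₁ L₂ (d r) * a n ^ r := by
  have hmem n : a n ∈ Algebra.adjoin L₁ {a (n + 1)} :=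
    haS n ▸ pow_mem (Algebra.self_mem_adjoin_singleton L₁ _) p
  obtain ⟨n, hn⟩ := exists_mem_adjoin_singleton_of_adjoin_range_eq_top hmem hgen x
  have hpn : p ^ n ≠ 0 := pow_ne_zero n hp
  have hdeg : (X ^ p ^ n - C (p : L₁)).natDegree = p ^ n := natDegree_X_pow_sub_C
  have hroot : aeval (a n) (X ^ p ^ n - C (p : L₁)) = 0 := by
    rw [map_sub, map_pow, aeval_X, aeval_C, pow_pow_eq_algebraMap ha0 haS n, sub_self]
  exact ⟨n, hdeg ▸ exists_eq_sum_pow_of_mem_adjoin_singleton (monic_X_pow_sub_C _ hpn) hroot hn⟩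

variable {n : ℕ}

theorem algebraMap_mul_pow_pow (hroot : a n ^ p ^ n = algebraMap L₁ L₂ p) (c : L₁) (r : ℕ) :
    (algebraMap L₁ L₂ c * a n ^ r) ^ p ^ n = algebraMap L₁ L₂ (c ^ p ^ n * p ^ r) := by
  rw [mul_pow, ← pow_mul, mul_comm r, pow_mul, hroot]
  simp

variable {Γ : Type*} [LinearOrderedCommGroupWithZero Γ] {v : Valuation L₂ Γ}

theorem exists_val_monomial_pow_eq (hp : (p : L₁) ≠ 0)
    (hval : ∀ c : L₁, c ≠ 0 → ∃ m : ℤ, v (algebraMap L₁ L₂ c) = v (algebraMap L₁ L₂ p) ^ m)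
    (hroot : a n ^ p ^ n = algebraMap L₁ L₂ p) {c : L₁} (hc : c ≠ 0) (r : ℕ) :
    ∃ m : ℤ, v (algebraMap L₁ L₂ c * a n ^ r) ^ p ^ n
      = v (algebraMap L₁ L₂ p) ^ (m * (p ^ n : ℕ) + r) := by
  obtain ⟨m, hm⟩ := hval c hc
  refine ⟨m, ?_⟩
  have hπ : v (algebraMap L₁ L₂ p) ≠ 0 := v.ne_zero_iff.2 ((_root_.map_ne_zero _).2 hp)
  rw [← map_pow, algebraMap_mul_pow_pow hroot]
  simp only [map_mul, map_pow]
  rw [hm, zpow_add₀ hπ, zpow_mul, zpow_natCast, zpow_natCast]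

theorem eq_of_val_monomial_eq (hp : (p : L₁) ≠ 0) (hvp : v (algebraMap L₁ L₂ p) ≠ 1)
    (hval : ∀ c : L₁, c ≠ 0 → ∃ m : ℤ, v (algebraMap L₁ L₂ c) = v (algebraMap L₁ L₂ p) ^ m)
    (hroot : a n ^ p ^ n = algebraMap L₁ L₂ p) {r s : ℕ} (hr : r < p ^ n) (hs : s < p ^ n)
    {c c' : L₁} (hc : c ≠ 0) (hc' : c' ≠ 0)
    (h : v (algebraMap L₁ L₂ c * a n ^ r) = v (algebraMap L₁ L₂ c' * a n ^ s)) : r = s := by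
  obtain ⟨m, hm⟩ := exists_val_monomial_pow_eq hp hval hroot hc r
  obtain ⟨m', hm'⟩ := exists_val_monomial_pow_eq hp hval hroot hc' s
  exact eq_of_zpow_mul_add_eq_zpow_mul_add (v.ne_zero_iff.2 ((_root_.map_ne_zero _).2 hp)) hvp
    hr hs (by rw [← hm, ← hm', h])

theorem val_monomial_ne (hp : (p : L₁) ≠ 0) (hvp : v (algebraMap L₁ L₂ p) ≠ 1)
    (hval : ∀ c : L₁, c ≠ 0 → ∃ m : ℤ, v (algebraMap L₁ L₂ c) = v (algebraMap L₁ L₂ p) ^ m)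
    (hroot : a n ^ p ^ n = algebraMap L₁ L₂ p) (d : ℕ → L₁) :
    ∀ i ∈ Finset.range (p ^ n), ∀ j ∈ Finset.range (p ^ n), i ≠ j →
      algebraMap L₁ L₂ (d i) * a n ^ i ≠ 0 →
      v (algebraMap L₁ L₂ (d i) * a n ^ i) ≠ v (algebraMap L₁ L₂ (d j) * a n ^ j) := by
  intro i hi j hj hij hti h
  have hdi : d i ≠ 0 := by rintro hdi; simp [hdi] at hti
  have hdj : d j ≠ 0 := by rintro hdj; simp [hdj] at h; simp [h] at hti
  exact hij (eq_of_val_monomial_eq hp hvp hval hroot (Finset.mem_range.1 hi)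
    (Finset.mem_range.1 hj) hdi hdj h)

theorem isEquiv_of_comap_isEquiv (hp : (p : L₁) ≠ 0) (hvp : v (algebraMap L₁ L₂ p) ≠ 1)
    (hval : ∀ c : L₁, c ≠ 0 → ∃ m : ℤ, v (algebraMap L₁ L₂ c) = v (algebraMap L₁ L₂ p) ^ m)
    (ha0 : a 0 = algebraMap L₁ L₂ p) (haS : ∀ i, a (i + 1) ^ p = a i)
    (hgen : Algebra.adjoin L₁ (Set.range a) = ⊤)
    {Γ' : Type*} [LinearOrderedCommGroupWithZero Γ'] {w : Valuation L₂ Γ'}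
    (hw : (w.comap (algebraMap L₁ L₂)).IsEquiv (v.comap (algebraMap L₁ L₂))) : w.IsEquiv v := by
  refine Valuation.isEquiv_of_val_le_one fun x => ?_
  obtain ⟨n, d, rfl⟩ := exists_eq_sum_monomials (fun h => hp (by simp [h])) ha0 haS hgen x
  have hroot := pow_pow_eq_algebraMap ha0 haS n
  have hpn : p ^ n ≠ 0 := pow_ne_zero n fun h => hp (by simp [h])
  have hcmp i j : w (algebraMap L₁ L₂ (d i) * a n ^ i) ≤ w (algebraMap L₁ L₂ (d j) * a n ^ j) ↔
      v (algebraMap L₁ L₂ (d i) * a n ^ i) ≤ v (algebraMap L₁ L₂ (d j) * a n ^ j) :=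
    Valuation.le_iff_le_of_pow_eq_algebraMap hw hpn (algebraMap_mul_pow_pow hroot _ _)
      (algebraMap_mul_pow_pow hroot _ _)
  have hcmp₁ i : w (algebraMap L₁ L₂ (d i) * a n ^ i) ≤ 1 ↔
      v (algebraMap L₁ L₂ (d i) * a n ^ i) ≤ 1 := by
    simpa only [map_one] using Valuation.le_iff_le_of_pow_eq_algebraMap hw hpn
      (algebraMap_mul_pow_pow hroot (d i) i) (y := 1) (d := 1) (by simp)
  have hv := val_monomial_ne hp hvp hval hroot d
  have hw' : ∀ i ∈ Finset.range (p ^ n), ∀ j ∈ Finset.range (p ^ n), i ≠ j →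
      algebraMap L₁ L₂ (d i) * a n ^ i ≠ 0 →
      w (algebraMap L₁ L₂ (d i) * a n ^ i) ≠ w (algebraMap L₁ L₂ (d j) * a n ^ j) :=
    fun i hi j hj hij hti h =>
      hv i hi j hj hij hti (le_antisymm ((hcmp i j).1 h.le) ((hcmp j i).1 h.ge))
  rw [w.map_sum_le_iff_of_ne hw', v.map_sum_le_iff_of_ne hv]
  exact forall₂_congr fun i _ => hcmp₁ i

theorem exists_val_pow_eq_zpow (hp : (p : L₁) ≠ 0) (hvp : v (algebraMap L₁ L₂ p) ≠ 1)
    (hval : ∀ c : L₁, c ≠ 0 → ∃ m : ℤ, v (algebraMap L₁ L₂ c) = v (algebraMap L₁ L₂ p) ^ m)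
    (ha0 : a 0 = algebraMap L₁ L₂ p) (haS : ∀ i, a (i + 1) ^ p = a i)
    (hgen : Algebra.adjoin L₁ (Set.range a) = ⊤) {x : L₂} (hx : x ≠ 0) :
    ∃ m : ℤ, ∃ n : ℕ, v x ^ p ^ n = v (algebraMap L₁ L₂ p) ^ m := by
  obtain ⟨n, d, rfl⟩ := exists_eq_sum_monomials (fun h => hp (by simp [h])) ha0 haS hgen x
  have hroot := pow_pow_eq_algebraMap ha0 haS n
  obtain ⟨j, -, hsum, -⟩ := v.exists_map_sum_eq_of_ne
    (Finset.nonempty_range_iff.2 (pow_ne_zero n fun h => hp (by simp [h])))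
    (val_monomial_ne hp hvp hval hroot d)
  have hdj : d j ≠ 0 := by
    rintro hdj
    simp [hdj] at hsum
    exact hx hsum
  obtain ⟨m, hm⟩ := exists_val_monomial_pow_eq hp hval hroot hdj j
  exact ⟨_, n, hsum ▸ hm⟩

theorem exists_val_sub_algebraMap_lt_one (hp : (p : L₁) ≠ 0)
    (hvp : v (algebraMap L₁ L₂ p) ≠ 1)
    (hval : ∀ c : L₁, c ≠ 0 → ∃ m : ℤ, v (algebraMap L₁ L₂ c) = v (algebraMap L₁ L₂ p) ^ m)
    (ha0 : a 0 = algebraMap L₁ L₂ p) (haS : ∀ i, a (i + 1) ^ p = a i)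
    (hgen : Algebra.adjoin L₁ (Set.range a) = ⊤) {x : L₂} (hx : v x ≤ 1) :
    ∃ c : L₁, v (x - algebraMap L₁ L₂ c) < 1 := by
  obtain ⟨n, d, rfl⟩ := exists_eq_sum_monomials (fun h => hp (by simp [h])) ha0 haS hgen x
  have hroot := pow_pow_eq_algebraMap ha0 haS n
  have hpn : 0 < p ^ n := Nat.pos_of_ne_zero (pow_ne_zero n fun h => hp (by simp [h]))
  have hle := (v.map_sum_le_iff_of_ne (val_monomial_ne hp hvp hval hroot d)).1 hx
  refine ⟨d 0, ?_⟩
  rw [← Finset.add_sum_erase _ _ (Finset.mem_range.2 hpn), pow_zero, mul_one, add_sub_cancel_left]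
  refine v.map_sum_lt one_ne_zero fun r hr => (hle r (Finset.mem_of_mem_erase hr)).lt_of_ne ?_
  obtain ⟨hr0, hr⟩ := Finset.mem_erase.1 hr
  by_cases hdr : d r = 0
  · simp [hdr]
  -- `1` is the monomial of index `0` with coefficient `1`
  exact fun h => hr0 (eq_of_val_monomial_eq hp hvp hval hroot (Finset.mem_range.1 hr) hpn hdr
    one_ne_zero (by simpa using h))

end PowerRootsOfP

theorem adjoining_p_power_roots_of_p_general
    {L₁ L₂ : Type*} [Field L₁] [Field L₂] [Algebra L₁ L₂] [CharP L₁ 0]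
    {p : ℕ} (hp : p.Prime)
    {Γ : Type*} [LinearOrderedCommGroupWithZero Γ] (v : Valuation L₂ Γ)
    -- residue characteristic `p`
    (hvp : v (algebraMap L₁ L₂ (p : L₁)) < 1)
    -- `v_p L₁ = ℤ·v_p(p)`
    (hval : ∀ c : L₁, c ≠ 0 → ∃ m : ℤ,
        v (algebraMap L₁ L₂ c) = (v (algebraMap L₁ L₂ (p : L₁))) ^ m)
    -- the coherent system of `p`-power roots of `p`, generating `L₂`
    (a : ℕ → L₂) (ha0 : a 0 = algebraMap L₁ L₂ (p : L₁))
    (haS : ∀ i : ℕ, (a (i + 1)) ^ p = a i)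
    (hgen : Algebra.adjoin L₁ (Set.range a) = ⊤) :
    -- `v_p` extends uniquely from `L₁` to `L₂`
    (∀ (Γ' : Type) [LinearOrderedCommGroupWithZero Γ'] (w : Valuation L₂ Γ'),
        (w.comap (algebraMap L₁ L₂)).IsEquiv (v.comap (algebraMap L₁ L₂)) → w.IsEquiv v) ∧
    -- `v_p L₂ = (1/p^∞)·ℤ·v_p(p)`
    (∀ x : L₂, x ≠ 0 → ∃ m : ℤ, ∃ n : ℕ,
        (v x) ^ (p ^ n) = (v (algebraMap L₁ L₂ (p : L₁))) ^ m) ∧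
    (∀ m : ℤ, ∀ n : ℕ, ∃ x : L₂, x ≠ 0 ∧
        (v x) ^ (p ^ n) = (v (algebraMap L₁ L₂ (p : L₁))) ^ m) ∧
    -- `L₂ v_p = L₁ v_p = K`
    (∀ x : L₂, v x ≤ 1 → ∃ c : L₁, v (x - algebraMap L₁ L₂ c) < 1) := by
  have hp₀ : (p : L₁) ≠ 0 := by
    have := CharP.charP_to_charZero L₁
    exact Nat.cast_ne_zero.2 hp.ne_zero
  have hroot := pow_pow_eq_algebraMap ha0 haS
  refine ⟨fun Γ' _ w hw => isEquiv_of_comap_isEquiv hp₀ hvp.ne hval ha0 haS hgen hw,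
    fun x hx => exists_val_pow_eq_zpow hp₀ hvp.ne hval ha0 haS hgen hx,
    fun m n => ⟨a n ^ m, ?_, ?_⟩,
    fun x hx => exists_val_sub_algebraMap_lt_one hp₀ hvp.ne hval ha0 haS hgen hx⟩
  · refine zpow_ne_zero m fun h => hp₀ ((map_eq_zero (algebraMap L₁ L₂)).1 ?_)
    rw [← hroot n, h, zero_pow (pow_ne_zero n hp.ne_zero)]
  · rw [← map_pow, ← zpow_natCast, ← zpow_mul, mul_comm, zpow_mul, zpow_natCast, hroot n,
      map_zpow₀]

/-- Let `(L₁, v_p)` be a valued field of characteristic `0` with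
`v_p L₁ = ℤ·v_p(p)` and perfect residue field `K` of characteristic `p`.  Choose
`a_0 = p` and `a_i` with `a_i^p = a_{i-1}`, and set `L₂ = L₁(a_i | i ∈ ℕ)`.  Then
`v_p` extends uniquely to `L₂`, `v_p L₂ = (1/p^∞)ℤ·v_p(p)`, and `L₂ v_p = K`
(the residue field does not grow).

Multiplicative convention: residue characteristic `p` reads `v p < 1`; the value
group conditions are expressed via powers of `v p`. -/
theorem adjoining_p_power_roots_of_p
    {L₁ L₂ : Type*} [Field L₁] [Field L₂] [Algebra L₁ L₂] [CharP L₁ 0]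
    {p : ℕ} (hp : p.Prime)
    {Γ : Type*} [LinearOrderedCommGroupWithZero Γ] (v : Valuation L₂ Γ)
    -- residue characteristic `p`
    (hvp : v (algebraMap L₁ L₂ (p : L₁)) < 1)
    -- `v_p L₁ = ℤ·v_p(p)`
    (hval : ∀ c : L₁, c ≠ 0 → ∃ m : ℤ,
        v (algebraMap L₁ L₂ c) = (v (algebraMap L₁ L₂ (p : L₁))) ^ m)
    -- the residue field `K` of `L₁` is perfect
    (hperf : ∀ c : L₁, v (algebraMap L₁ L₂ c) ≤ 1 →
        ∃ d : L₁, v (algebraMap L₁ L₂ (c - d ^ p)) < 1)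
    -- the coherent system of `p`-power roots of `p`, generating `L₂`
    (a : ℕ → L₂) (ha0 : a 0 = algebraMap L₁ L₂ (p : L₁))
    (haS : ∀ i : ℕ, (a (i + 1)) ^ p = a i)
    (hgen : Algebra.adjoin L₁ (Set.range a) = ⊤) :
    -- `v_p` extends uniquely from `L₁` to `L₂`
    (∀ (Γ' : Type) [LinearOrderedCommGroupWithZero Γ'] (w : Valuation L₂ Γ'),
        (w.comap (algebraMap L₁ L₂)).IsEquiv (v.comap (algebraMap L₁ L₂)) → w.IsEquiv v) ∧
    -- `v_p L₂ = (1/p^∞)·ℤ·v_p(p)`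
    (∀ x : L₂, x ≠ 0 → ∃ m : ℤ, ∃ n : ℕ,
        (v x) ^ (p ^ n) = (v (algebraMap L₁ L₂ (p : L₁))) ^ m) ∧
    (∀ m : ℤ, ∀ n : ℕ, ∃ x : L₂, x ≠ 0 ∧
        (v x) ^ (p ^ n) = (v (algebraMap L₁ L₂ (p : L₁))) ^ m) ∧
    -- `L₂ v_p = L₁ v_p = K`
    (∀ x : L₂, v x ≤ 1 → ∃ c : L₁, v (x - algebraMap L₁ L₂ c) < 1) :=
  adjoining_p_power_roots_of_p_general hp v hvp hval a ha0 haS hgen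
end

section
/- Let Γ be an ordered abelian group, S a final segment of Γ^{>0} such that S = {α ∈ Γ | α > H} for some proper convex subgroup H of Γ where Γ/H has no smallest positive element. Then H is the invariance group of S, i.e., H = {γ ∈ Γ | S + γ = S}. -/
/-!
A translate by `γ ∈ H` preserves `S = {α | α > H}` because `H - γ = H`. Conversely, by
convexity an element `γ ∉ H` has `γ > H` or `-γ > H`, and since the invariance group is a
group we may assume `γ ∈ S`; then `γ ∈ S = γ + S` forces `0 ∈ S`, which fails as `0 ∈ H`.
-/

open Pointwise AddAction

def strictUpperBounds {α : Type*} [LT α] (s : Set α) : Set α := {a | ∀ b ∈ s, b < a}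

lemma coe_stabilizer_eq_setOf_image_add_eq {G : Type*} [AddCommGroup G] (s : Set G) :
    (stabilizer G s : Set G) = {g | (fun a => a + g) '' s = s} := by
  ext g
  simp only [SetLike.mem_coe, mem_stabilizer_iff, Set.mem_ofPred_eq, ← Set.image_vadd,
    vadd_eq_add, add_comm]

section OrderedGroup

variable {Γ : Type*} [AddCommGroup Γ] [LinearOrder Γ] [IsOrderedAddMonoid Γ]

lemma add_mem_strictUpperBounds_of_mem (H : AddSubgroup Γ) {α γ : Γ}
    (hα : α ∈ strictUpperBounds (H : Set Γ)) (hγ : γ ∈ H) :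
    α + γ ∈ strictUpperBounds (H : Set Γ) := fun _ hh =>
  sub_lt_iff_lt_add.mp (hα _ (H.sub_mem hh hγ))

lemma mem_stabilizer_strictUpperBounds_of_mem (H : AddSubgroup Γ) {γ : Γ} (hγ : γ ∈ H) :
    γ ∈ stabilizer Γ (strictUpperBounds (H : Set Γ)) := by
  rw [mem_stabilizer_iff]
  ext β
  refine ⟨?_, fun hβ => ⟨β - γ, ?_, add_sub_cancel γ β⟩⟩
  · rintro ⟨α, hα, rfl⟩
    dsimp only
    rw [vadd_eq_add, add_comm]
    exact add_mem_strictUpperBounds_of_mem H hα hγ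
  · simpa only [sub_eq_add_neg] using add_mem_strictUpperBounds_of_mem H hβ (H.neg_mem hγ)

lemma notMem_stabilizer_strictUpperBounds {s : Set Γ} (hs : 0 ∈ s) {γ : Γ}
    (hγ : γ ∈ strictUpperBounds s) : γ ∉ stabilizer Γ (strictUpperBounds s) := by
  intro hstab
  rw [mem_stabilizer_iff] at hstab
  rw [← hstab] at hγ
  obtain ⟨α, hα, hαγ⟩ := hγ
  have hα0 : α = 0 := add_eq_left.mp hαγ
  exact lt_irrefl 0 (hα 0 hs |>.trans_eq hα0)

lemma mem_strictUpperBounds_or_neg_mem_of_notMem (H : AddSubgroup Γ)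
    (hconv : (H : Set Γ).OrdConnected) {γ : Γ} (hγ : γ ∉ H) :
    γ ∈ strictUpperBounds (H : Set Γ) ∨ -γ ∈ strictUpperBounds (H : Set Γ) := by
  by_contra! hboth
  simp only [strictUpperBounds, Set.mem_ofPred_eq, SetLike.mem_coe, not_forall, not_lt] at hboth
  obtain ⟨⟨h₁, hh₁, hγh₁⟩, ⟨h₂, hh₂, hγh₂⟩⟩ := hboth
  exact hγ (hconv.out (H.neg_mem hh₂) hh₁ ⟨neg_le.mp hγh₂, hγh₁⟩)

theorem stabilizer_strictUpperBounds_eq (H : AddSubgroup Γ) (hconv : (H : Set Γ).OrdConnected) :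
    stabilizer Γ (strictUpperBounds (H : Set Γ)) = H := by
  ext γ
  refine ⟨fun hstab => ?_, mem_stabilizer_strictUpperBounds_of_mem H⟩
  by_contra hγ
  rcases mem_strictUpperBounds_or_neg_mem_of_notMem H hconv hγ with hpos | hneg
  · exact notMem_stabilizer_strictUpperBounds H.zero_mem hpos hstab
  · exact notMem_stabilizer_strictUpperBounds H.zero_mem hneg (neg_mem hstab)

end OrderedGroup

theorem convex_subgroup_is_invariance_group_of_upper_segment_general
    {Γ : Type*} [AddCommGroup Γ] [LinearOrder Γ] [IsOrderedAddMonoid Γ] (H : Set Γ)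
    (hH0 : (0 : Γ) ∈ H)
    (hHadd : ∀ a ∈ H, ∀ b ∈ H, a + b ∈ H)
    (hHneg : ∀ a ∈ H, -a ∈ H)
    (hHconv : ∀ a ∈ H, ∀ b ∈ H, ∀ c : Γ, a ≤ c → c ≤ b → c ∈ H) :
    {γ : Γ | (fun α => α + γ) '' {α : Γ | ∀ h ∈ H, h < α} = {α : Γ | ∀ h ∈ H, h < α}}
      = H := by
  let H' : AddSubgroup Γ :=
    { carrier := H
      add_mem' := fun ha hb => hHadd _ ha _ hb
      zero_mem' := hH0
      neg_mem' := fun ha => hHneg _ ha }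
  have hconv : (H' : Set Γ).OrdConnected := ⟨fun a ha b hb _ hc => hHconv a ha b hb _ hc.1 hc.2⟩
  have hstab := congrArg ((↑) : AddSubgroup Γ → Set Γ) (stabilizer_strictUpperBounds_eq H' hconv)
  rwa [coe_stabilizer_eq_setOf_image_add_eq] at hstab

/-- Let `Γ` be an ordered abelian group, `H` a proper convex subgroup
such that `Γ/H` has no smallest positive element, and
`S = {α ∈ Γ | α > h for all h ∈ H}` (a final segment of `Γ^{>0}`).  Then `H` is the
invariance group of `S`, i.e. `H = {γ ∈ Γ | S + γ = S}`.

"`Γ/H` has no smallest positive element" is expressed without quotients: for every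
`γ` with `γ > H` there is `δ` with `δ > H`, `δ < γ` and `γ - δ ∉ H` (so that
`δ + H < γ + H` in `Γ/H`). -/
theorem convex_subgroup_is_invariance_group_of_upper_segment
    {Γ : Type*} [AddCommGroup Γ] [LinearOrder Γ] [IsOrderedAddMonoid Γ] (H : Set Γ)
    (hH0 : (0 : Γ) ∈ H)
    (hHadd : ∀ a ∈ H, ∀ b ∈ H, a + b ∈ H)
    (hHneg : ∀ a ∈ H, -a ∈ H)
    (hHconv : ∀ a ∈ H, ∀ b ∈ H, ∀ c : Γ, a ≤ c → c ≤ b → c ∈ H)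
    (hproper : ∃ γ : Γ, γ ∉ H)
    (hnosmallest : ∀ γ : Γ, (∀ h ∈ H, h < γ) →
        ∃ δ : Γ, (∀ h ∈ H, h < δ) ∧ δ < γ ∧ γ - δ ∉ H) :
    {γ : Γ | (fun α => α + γ) '' {α : Γ | ∀ h ∈ H, h < α} = {α : Γ | ∀ h ∈ H, h < α}}
      = H :=
  convex_subgroup_is_invariance_group_of_upper_segment_general H hH0 hHadd hHneg hHconv
end

section
/- Let (L|K,v) be a valued field extension and z ∈ L \ K an element such that v(z - K) has no maximal element (an immediate element). If z does not lie in the completion of (K,v), then v(z - K) is bounded above in vK; consequently I_{z-K} := {b ∈ L | ∃c ∈ K, vb ≥ -v(z - c)} is a fractional O_L-ideal (an O_L-submodule of L with aI ⊆ O_L for some nonzero a ∈ O_L). -/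
/-- Let `(L|K,v)` be a valued field extension and `z ∈ L \ K` an
immediate element, i.e. `v(z - K) = {v(z - c) | c ∈ K}` has no maximal element
(multiplicatively: no minimal element).  If `z` does not lie in the completion of
`(K,v)` — i.e. it is not the case that `z` can be approximated by elements of `K`
to within every value in `vK` — then `v(z - K)` is bounded above in `vK`
(multiplicatively: bounded below by an element of `vK`); consequently
`I_{z-K} = {b ∈ L | ∃ c ∈ K, vb ≥ -v(z - c)}` (multiplicatively:
`{b | ∃ c, v b ≤ (v (z - c))⁻¹}`) is a fractional `O_L`-ideal: an
`O_L`-submodule of `L` with `a·I ⊆ O_L` for some nonzero `a ∈ O_L`. -/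
theorem immediate_element_not_in_completion_gives_fractional_ideal
    {K L : Type*} [Field K] [Field L] [Algebra K L]
    {Γ : Type*} [LinearOrderedCommGroupWithZero Γ] (v : Valuation L Γ)
    (z : L) (hz : z ∉ Set.range (algebraMap K L))
    -- `v(z - K)` has no maximal element
    (hnomax : ∀ c : K, ∃ c' : K, v (z - algebraMap K L c') < v (z - algebraMap K L c))
    -- `z` does not lie in the completion of `(K,v)`
    (hcomp : ¬ ∀ γ : Γ, γ ≠ 0 → (∃ c₀ : K, v (algebraMap K L c₀) = γ) →
        ∃ c : K, v (z - algebraMap K L c) < γ) :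
    let I : Set L := {b : L | ∃ c : K, v b ≤ (v (z - algebraMap K L c))⁻¹}
    -- `v(z - K)` is bounded above in `vK`
    (∃ γ : Γ, (∃ c₀ : K, c₀ ≠ 0 ∧ v (algebraMap K L c₀) = γ) ∧
        ∀ c : K, γ ≤ v (z - algebraMap K L c)) ∧
    -- `I_{z-K}` is an `O_L`-submodule of `L` ...
    ((0 : L) ∈ I ∧ (∀ x ∈ I, ∀ y ∈ I, x + y ∈ I) ∧
      (∀ a : L, v a ≤ 1 → ∀ x ∈ I, a * x ∈ I)) ∧
    -- ... which is fractional: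
    (∃ a : L, a ≠ 0 ∧ v a ≤ 1 ∧ ∀ x ∈ I, v (a * x) ≤ 1) := by
  push_neg at hcomp
  obtain ⟨γ, hγ0, ⟨c₀, hc₀⟩, hbd⟩ := hcomp
  have hbd' : ∀ c : K, γ ≤ v (z - algebraMap K L c) := hbd
  have hzc : ∀ c : K, v (z - algebraMap K L c) ≠ 0 := by
    intro c h
    rw [Valuation.zero_iff, sub_eq_zero] at h
    exact hz ⟨c, h.symm⟩
  intro I
  have hIval : ∀ x ∈ I, v x ≤ γ⁻¹ := by
    intro x ⟨c, hc⟩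
    exact hc.trans ((inv_le_inv₀ (zero_lt_iff.mpr (hzc c)) (zero_lt_iff.mpr hγ0)).mpr (hbd' c))
  have hc₀ne : c₀ ≠ 0 := by
    intro h; rw [h, map_zero, map_zero] at hc₀; exact hγ0 hc₀.symm
  refine ⟨⟨γ, ⟨c₀, hc₀ne, hc₀⟩, hbd'⟩, ⟨⟨0, by simp⟩, ?_, ?_⟩, ?_⟩
  · rintro x ⟨cx, hx⟩ y ⟨cy, hy⟩
    rcases le_total (v (z - algebraMap K L cx)) (v (z - algebraMap K L cy)) with h | h
    · exact ⟨cx, (v.map_add x y).trans (max_le hx (hy.trans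
        ((inv_le_inv₀ (zero_lt_iff.mpr (hzc cy)) (zero_lt_iff.mpr (hzc cx))).mpr h)))⟩
    · exact ⟨cy, (v.map_add x y).trans (max_le (hx.trans
        ((inv_le_inv₀ (zero_lt_iff.mpr (hzc cx)) (zero_lt_iff.mpr (hzc cy))).mpr h)) hy)⟩
  · rintro a ha x ⟨c, hx⟩
    exact ⟨c, by rw [v.map_mul]; calc v a * v x ≤ 1 * v x := mul_le_mul_left ha _
      _ = v x := one_mul _
      _ ≤ _ := hx⟩
  · rcases le_total γ 1 with h1 | h1
    · refine ⟨algebraMap K L c₀, (map_ne_zero _).mpr hc₀ne, hc₀.le.trans h1, ?_⟩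
      intro x hx
      rw [v.map_mul, hc₀]
      calc γ * v x ≤ γ * γ⁻¹ := mul_le_mul_right (hIval x hx) _
        _ = 1 := mul_inv_cancel₀ hγ0
    · refine ⟨1, one_ne_zero, le_of_eq (map_one v), ?_⟩
      intro x hx
      rw [one_mul]
      calc v x ≤ γ⁻¹ := hIval x hx
        _ ≤ 1 := inv_le_one_of_one_le₀ h1
end
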